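/- arXiv:math-ph/0208036 — 4 statements merged into one kernel-verified Lean document; each statement's English description precedes it below -/
import Mathlib

section
/- Let n, k ≥ 1 and let W = (Fin n → ℝ) × (Fin k → Fin n → ℝ) with the canonical forms ω_A. Let H : W → ℝ be differentiable and let X : W → Fin k → W be a k-vector field, X w A = (a w A, b w A), which is an evolution k-vector field for H, i.e. for every w ∈ W and every u ∈ W: ∑_{A : Fin k} ω_A (X w A, u) = (fderiv ℝ H w) u. Let σ : (Fin k → ℝ) → W be a differentiable integral section of X, i.e. (fderiv ℝ σ t) (Pi.single A 1) = X (σ t) A for every t and every A. Writing σ t = (σ₁ t, σ₂ t), the section σ satisfies the Hamilton field equations: for every t, every i : Fin n and every A : Fin k, (fderiv ℝ H (σ t)) (Pi.single i 1, 0) = − ∑_{B : Fin k} (fderiv ℝ (fun s => σ₂ s B i) t) (Pi.single B 1), and (fderiv ℝ H (σ t)) (0, Pi.single A (Pi.single i 1)) = (fderiv ℝ (fun s => σ₁ s i) t) (Pi.single A 1). -/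
open scoped BigOperators

/-- The linear model of the canonical `k`-symplectic manifold `(T¹_k)*ℝⁿ`. -/
abbrev W11 (n k : ℕ) : Type := (Fin n → ℝ) × (Fin k → Fin n → ℝ)

/-- The canonical forms `ω_A = ∑ᵢ dxⁱ ∧ dp^A_i` on `W11 n k`. -/
def omega11 (n k : ℕ) (A : Fin k) (v w : W11 n k) : ℝ :=
  ∑ i, (w.2 A i * v.1 i - v.2 A i * w.1 i)

private lemma fderiv_clm_comp11 {n k : ℕ} (σ : (Fin k → ℝ) → W11 n k)
    (hσdiff : Differentiable ℝ σ) (L : W11 n k →L[ℝ] ℝ) (t v : Fin k → ℝ) :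
    fderiv ℝ (fun s => L (σ s)) t v = L (fderiv ℝ σ t v) := by
  have h := (L.hasFDerivAt.comp t (hσdiff t).hasFDerivAt).fderiv
  have : fderiv ℝ (fun s => L (σ s)) t = L.comp (fderiv ℝ σ t) := h
  rw [this]; rfl

/-- An integral section of an evolution `k`-vector field of a Hamiltonian `H` on
`(T¹_k)*ℝⁿ` satisfies the classical Hamilton field equations
`∂H/∂xⁱ = −∑_A ∂σ^A_i/∂t^A` and `∂H/∂p^A_i = ∂σⁱ/∂t^A`. -/
theorem stmt11 (n k : ℕ) (hn : 1 ≤ n) (hk : 1 ≤ k)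
    (H : W11 n k → ℝ) (hH : Differentiable ℝ H)
    (X : W11 n k → Fin k → W11 n k)
    (hX : ∀ (w u : W11 n k), ∑ A : Fin k, omega11 n k A (X w A) u = fderiv ℝ H w u)
    (σ : (Fin k → ℝ) → W11 n k) (hσdiff : Differentiable ℝ σ)
    (hσ : ∀ (t : Fin k → ℝ) (A : Fin k),
      fderiv ℝ σ t (Pi.single A 1) = X (σ t) A) :
    (∀ (t : Fin k → ℝ) (i : Fin n),
      fderiv ℝ H (σ t) (Pi.single i 1, 0) =
        - ∑ B : Fin k, fderiv ℝ (fun s => (σ s).2 B i) t (Pi.single B 1)) ∧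
    (∀ (t : Fin k → ℝ) (i : Fin n) (A : Fin k),
      fderiv ℝ H (σ t) (0, Pi.single A (Pi.single i 1)) =
        fderiv ℝ (fun s => (σ s).1 i) t (Pi.single A 1)) := by
  constructor
  · intro t i
    have h1 : fderiv ℝ H (σ t) (Pi.single i 1, 0) =
        ∑ A : Fin k, omega11 n k A (X (σ t) A) (Pi.single i 1, 0) := (hX (σ t) _).symm
    rw [h1]
    have h2 : ∀ A : Fin k, omega11 n k A (X (σ t) A) (Pi.single i 1, 0) =
        - (X (σ t) A).2 A i := by
      intro A
      simp only [omega11, Prod.fst, Prod.snd, Pi.zero_apply, zero_mul, zero_sub]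
      rw [Finset.sum_eq_single i]
      · simp
      · intro b _ hb; simp [Pi.single_eq_of_ne hb]
      · simp
    have h3 : ∀ B : Fin k,
        fderiv ℝ (fun s => (σ s).2 B i) t (Pi.single B 1) = (X (σ t) B).2 B i := by
      intro B
      have := fderiv_clm_comp11 σ hσdiff
        ((ContinuousLinearMap.proj (R := ℝ) (φ := fun _ : Fin n => ℝ) i).comp
          ((ContinuousLinearMap.proj (R := ℝ) (φ := fun _ : Fin k => Fin n → ℝ) B).comp
            (ContinuousLinearMap.snd ℝ (Fin n → ℝ) (Fin k → Fin n → ℝ)))) t (Pi.single B 1)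
      simp only [ContinuousLinearMap.comp_apply, ContinuousLinearMap.proj_apply,
        ContinuousLinearMap.coe_snd'] at this
      rw [this, hσ t B]
    simp only [h2, h3, Finset.sum_neg_distrib]
  · intro t i A
    have h1 : fderiv ℝ H (σ t) (0, Pi.single A (Pi.single i 1)) =
        ∑ B : Fin k, omega11 n k B (X (σ t) B) (0, Pi.single A (Pi.single i 1)) :=
      (hX (σ t) _).symm
    rw [h1]
    have h2 : ∀ B : Fin k, omega11 n k B (X (σ t) B) (0, Pi.single A (Pi.single i 1)) =
        if B = A then (X (σ t) A).1 i else 0 := by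
      intro B
      simp only [omega11, Prod.fst, Prod.snd, Pi.zero_apply, mul_zero, sub_zero]
      by_cases hBA : B = A
      · subst hBA
        simp only [Pi.single_eq_same, if_true]
        rw [Finset.sum_eq_single i]
        · simp
        · intro b _ hb; simp [Pi.single_eq_of_ne hb]
        · simp
      · simp [Pi.single_eq_of_ne hBA, hBA]
    rw [Finset.sum_congr rfl (fun B _ => h2 B), Finset.sum_ite_eq' _ A, if_pos (Finset.mem_univ A)]
    have := fderiv_clm_comp11 σ hσdiff
      ((ContinuousLinearMap.proj (R := ℝ) (φ := fun _ : Fin n => ℝ) i).comp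
        (ContinuousLinearMap.fst ℝ (Fin n → ℝ) (Fin k → Fin n → ℝ))) t (Pi.single A 1)
    simp only [ContinuousLinearMap.comp_apply, ContinuousLinearMap.proj_apply,
      ContinuousLinearMap.coe_fst'] at this
    rw [this, hσ t A]
end

section
/- Let n ≥ 0 and k ≥ 1, and let V = Fin n → ℝ. Let Λ^k₂ denote the subspace of alternating k-linear maps ω : ((Fin k → ℝ) × V)^k → ℝ with the property that ω(v₁,…,v_k) = 0 whenever at least two of the arguments v_j lie in the subspace {0} × V. Let ê_i = (Pi.single i 1, 0) for i : Fin k. Then the linear map Ψ : Λ^k₂ → ℝ × (Fin k → (V →ₗ[ℝ] ℝ)) defined by Ψ(ω) = ( ω(ê₁,…,ê_k), B ↦ (x ↦ ω(ê₁,…,ê_{B−1}, (0,x), ê_{B+1},…,ê_k)) ) is a linear equivalence (it is bijective). -/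
open scoped BigOperators

/-- The subspace `Λ^k₂` of alternating `k`-linear maps on `ℝᵏ × V` (`V = Fin n → ℝ`)
that vanish whenever at least two of their arguments lie in the vertical subspace
`{0} × V`. -/
noncomputable def Lambda2 (n k : ℕ) :
    Submodule ℝ (AlternatingMap ℝ ((Fin k → ℝ) × (Fin n → ℝ)) ℝ (Fin k)) where
  carrier := {ω | ∀ (v : Fin k → (Fin k → ℝ) × (Fin n → ℝ)) (j₁ j₂ : Fin k),
    j₁ ≠ j₂ → (v j₁).1 = 0 → (v j₂).1 = 0 → ω v = 0}
  add_mem' := by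
    intro a b ha hb v j₁ j₂ hne h1 h2
    simp [ha v j₁ j₂ hne h1 h2, hb v j₁ j₂ hne h1 h2]
  zero_mem' := by intro v j₁ j₂ hne h1 h2; simp
  smul_mem' := by
    intro c a ha v j₁ j₂ hne h1 h2
    simp [ha v j₁ j₂ hne h1 h2]

/-- The horizontal basis vectors `ê_i = (Pi.single i 1, 0)`. -/
def ehat (n k : ℕ) (i : Fin k) : (Fin k → ℝ) × (Fin n → ℝ) := (Pi.single i 1, 0)

/-- The map `Ψ(ω) = (ω(ê₁,…,ê_k), B ↦ (x ↦ ω(ê₁,…,(0,x) at slot B,…,ê_k)))`. -/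
noncomputable def Psi (n k : ℕ)
    (ω : AlternatingMap ℝ ((Fin k → ℝ) × (Fin n → ℝ)) ℝ (Fin k)) :
    ℝ × (Fin k → ((Fin n → ℝ) →ₗ[ℝ] ℝ)) :=
  (ω (fun i => ehat n k i),
    fun B =>
      { toFun := fun x => ω (Function.update (fun i => ehat n k i) B (0, x))
        map_add' := fun x y => by
          try dsimp only
          rw [show ((0 : Fin k → ℝ), x + y)
              = ((0 : Fin k → ℝ), x) + ((0 : Fin k → ℝ), y) by
            rw [Prod.mk_add_mk, add_zero]]
          exact ω.map_update_add _ B _ _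
        map_smul' := fun c x => by
          try dsimp only
          rw [show ((0 : Fin k → ℝ), c • x) = c • ((0 : Fin k → ℝ), x) by
            rw [Prod.smul_mk, smul_zero]]
          simpa using ω.map_update_smul (fun i => ehat n k i) B c (0, x) })

namespace Stmt13Aux

lemma mem_Lambda2 (n k : ℕ) (ω : AlternatingMap ℝ ((Fin k → ℝ) × (Fin n → ℝ)) ℝ (Fin k)) :
    ω ∈ Lambda2 n k ↔ ∀ (v : Fin k → (Fin k → ℝ) × (Fin n → ℝ)) (j₁ j₂ : Fin k),
      j₁ ≠ j₂ → (v j₁).1 = 0 → (v j₂).1 = 0 → ω v = 0 := Iff.rfl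

lemma Psi_fst (n k : ℕ) (ω : AlternatingMap ℝ ((Fin k → ℝ) × (Fin n → ℝ)) ℝ (Fin k)) :
    (Psi n k ω).1 = ω (fun i => ehat n k i) := rfl

lemma Psi_snd (n k : ℕ) (ω : AlternatingMap ℝ ((Fin k → ℝ) × (Fin n → ℝ)) ℝ (Fin k))
    (B : Fin k) (x : Fin n → ℝ) :
    (Psi n k ω).2 B x = ω (Function.update (fun i => ehat n k i) B (0, x)) := rfl

lemma Psi_add (n k : ℕ) (ω ω' : AlternatingMap ℝ ((Fin k → ℝ) × (Fin n → ℝ)) ℝ (Fin k)) :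
    Psi n k (ω + ω') = Psi n k ω + Psi n k ω' := by
  apply Prod.ext
  · simp [Psi]
  · funext B
    apply LinearMap.ext
    intro x
    simp [Psi]

lemma Psi_smul (n k : ℕ) (c : ℝ) (ω : AlternatingMap ℝ ((Fin k → ℝ) × (Fin n → ℝ)) ℝ (Fin k)) :
    Psi n k (c • ω) = c • Psi n k ω := by
  apply Prod.ext
  · simp [Psi]
  · funext B
    apply LinearMap.ext
    intro x
    simp [Psi]

noncomputable def phiA (n k : ℕ) (α : Fin k → ((Fin n → ℝ) →ₗ[ℝ] ℝ)) (i : Fin k) :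
    ((Fin k → ℝ) × (Fin n → ℝ)) →ₗ[ℝ] (Fin k → ℝ) :=
  LinearMap.pi (fun p => if p = i then (α i).comp (LinearMap.snd ℝ _ _)
    else (LinearMap.proj p).comp (LinearMap.fst ℝ _ _))

lemma phiA_apply (n k : ℕ) (α : Fin k → ((Fin n → ℝ) →ₗ[ℝ] ℝ)) (i : Fin k)
    (w : (Fin k → ℝ) × (Fin n → ℝ)) (p : Fin k) :
    phiA n k α i w p = if p = i then α i w.2 else w.1 p := by
  simp [phiA, LinearMap.pi_apply]
  split <;> simp

lemma phiA_vert (n k : ℕ) (α : Fin k → ((Fin n → ℝ) →ₗ[ℝ] ℝ)) (i : Fin k)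
    (w : (Fin k → ℝ) × (Fin n → ℝ)) (hw : w.1 = 0) :
    phiA n k α i w = (α i w.2) • (Pi.single i (1:ℝ) : Fin k → ℝ) := by
  funext p
  rw [phiA_apply]
  rcases eq_or_ne p i with rfl | hpi
  · simp
  · simp [hpi, hw, Pi.single_apply, Ne.symm hpi]

lemma memA (n k : ℕ) (α : Fin k → ((Fin n → ℝ) →ₗ[ℝ] ℝ)) (i : Fin k)
    (v : Fin k → (Fin k → ℝ) × (Fin n → ℝ)) (j₁ j₂ : Fin k)
    (hne : j₁ ≠ j₂) (h1 : (v j₁).1 = 0) (h2 : (v j₂).1 = 0) :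
    Matrix.detRowAlternating.compLinearMap (phiA n k α i) v = 0 := by
  rw [AlternatingMap.compLinearMap_apply]
  set u : Fin k → (Fin k → ℝ) := fun j => phiA n k α i (v j) with hu
  set s : Fin k → ℝ := Pi.single i (1:ℝ) with hs
  have h1' : u j₁ = (α i (v j₁).2) • s := phiA_vert n k α i _ h1
  have h2' : u j₂ = (α i (v j₂).2) • s := phiA_vert n k α i _ h2
  have hrw : u = Function.update (Function.update u j₂ ((α i (v j₂).2) • s)) j₁
      ((α i (v j₁).2) • s) := by
    funext j
    rcases eq_or_ne j j₁ with rfl | hj1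
    · simp [h1']
    · rcases eq_or_ne j j₂ with rfl | hj2
      · simp [Function.update_of_ne (Ne.symm hne), h2']
      · simp [Function.update_of_ne hj1, Function.update_of_ne hj2]
  rw [hrw, AlternatingMap.map_update_smul, Function.update_comm (Ne.symm hne),
    AlternatingMap.map_update_smul]
  rw [AlternatingMap.map_eq_zero_of_eq _ _ (i := j₁) (j := j₂)]
  · simp
  · simp [Function.update_of_ne (Ne.symm hne), Function.update_self, Function.update_of_ne hne]
  · exact hne

noncomputable def omega0 (n k : ℕ) :
    AlternatingMap ℝ ((Fin k → ℝ) × (Fin n → ℝ)) ℝ (Fin k) :=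
  Matrix.detRowAlternating.compLinearMap (LinearMap.fst ℝ (Fin k → ℝ) (Fin n → ℝ))

lemma omega0_ehat (n k : ℕ) : omega0 n k (fun i => ehat n k i) = 1 := by
  rw [omega0, AlternatingMap.compLinearMap_apply]
  have : (fun j => (LinearMap.fst ℝ (Fin k → ℝ) (Fin n → ℝ)) (ehat n k j))
      = (1 : Matrix (Fin k) (Fin k) ℝ) := by
    funext j p
    simp [ehat, Matrix.one_apply, Pi.single_apply, eq_comm]
  rw [this]
  exact Matrix.det_one

lemma omega0_upd (n k : ℕ) (B : Fin k) (x : Fin n → ℝ) :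
    omega0 n k (Function.update (fun i => ehat n k i) B (0, x)) = 0 := by
  rw [omega0, AlternatingMap.compLinearMap_apply]
  refine Matrix.det_eq_zero_of_row_eq_zero B ?_
  intro j
  simp [Matrix.of_apply]

lemma omega0_mem (n k : ℕ) (v : Fin k → (Fin k → ℝ) × (Fin n → ℝ)) (j₁ j₂ : Fin k)
    (hne : j₁ ≠ j₂) (h1 : (v j₁).1 = 0) (h2 : (v j₂).1 = 0) :
    omega0 n k v = 0 := by
  rw [omega0, AlternatingMap.compLinearMap_apply]
  refine Matrix.det_eq_zero_of_row_eq_zero j₁ ?_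
  intro j
  simp [h1]

lemma omegaAi_ehat (n k : ℕ) (α : Fin k → ((Fin n → ℝ) →ₗ[ℝ] ℝ)) (i : Fin k) :
    Matrix.detRowAlternating.compLinearMap (phiA n k α i) (fun j => ehat n k j) = 0 := by
  rw [AlternatingMap.compLinearMap_apply]
  refine Matrix.det_eq_zero_of_column_eq_zero i ?_
  intro j
  simp [Matrix.of_apply, phiA_apply, ehat]

lemma omegaAi_upd (n k : ℕ) (α : Fin k → ((Fin n → ℝ) →ₗ[ℝ] ℝ)) (i : Fin k)
    (B : Fin k) (x : Fin n → ℝ) :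
    Matrix.detRowAlternating.compLinearMap (phiA n k α i)
      (Function.update (fun j => ehat n k j) B (0, x))
      = if i = B then α B x else 0 := by
  rw [AlternatingMap.compLinearMap_apply]
  rcases eq_or_ne i B with rfl | hiB
  · simp only [if_pos rfl]
    have : (fun j => (phiA n k α i) (Function.update (fun j => ehat n k j) i (0, x) j))
        = (Matrix.diagonal (fun j => if j = i then α i x else 1) : Matrix (Fin k) (Fin k) ℝ) := by
      funext j p
      rcases eq_or_ne j i with rfl | hj
      · simp only [Function.update_self, phiA_apply]
        rcases eq_or_ne p j with rfl | hp
        · simp [Matrix.diagonal_apply_eq]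
        · rw [Matrix.diagonal_apply_ne' _ hp, if_neg hp]
          rfl
      · simp only [Function.update_of_ne hj, phiA_apply, ehat]
        rcases eq_or_ne p i with rfl | hp
        · simp [Matrix.diagonal_apply_ne _ hj, hj]
        · rcases eq_or_ne p j with rfl | hpj
          · simp [Matrix.diagonal_apply_eq, hp, Pi.single_apply]
          · simp [hp, Ne.symm hpj, Matrix.diagonal_apply_ne' _ hpj, Pi.single_apply]
    rw [this]
    have hdet : Matrix.det (Matrix.diagonal fun j => if j = i then α i x else 1) = α i x := by
      simp [Matrix.det_diagonal, Finset.prod_ite_eq']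
    exact hdet
  · rw [if_neg hiB]
    refine Matrix.det_eq_zero_of_row_eq_zero i ?_
    intro p
    simp only [Matrix.of_apply, Function.update_of_ne hiB, phiA_apply, ehat]
    rcases eq_or_ne p i with rfl | hp
    · simp
    · simp [hp, Pi.single_apply, Ne.symm hp]

lemma altsum_apply {ι' : Type*} (s : Finset ι')
    (f : ι' → AlternatingMap ℝ ((Fin k → ℝ) × (Fin n → ℝ)) ℝ (Fin k))
    (v : Fin k → (Fin k → ℝ) × (Fin n → ℝ)) :
    (∑ i ∈ s, f i) v = ∑ i ∈ s, f i v := by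
  induction s using Finset.cons_induction with
  | empty => simp
  | cons a s ha ih => simp [Finset.sum_cons, ih]

lemma inj_aux (n k : ℕ) (ω : AlternatingMap ℝ ((Fin k → ℝ) × (Fin n → ℝ)) ℝ (Fin k))
    (hω : ∀ (v : Fin k → (Fin k → ℝ) × (Fin n → ℝ)) (j₁ j₂ : Fin k),
      j₁ ≠ j₂ → (v j₁).1 = 0 → (v j₂).1 = 0 → ω v = 0)
    (hr : ω (fun i => ehat n k i) = 0)
    (hα : ∀ (B : Fin k) (x : Fin n → ℝ),
      ω (Function.update (fun i => ehat n k i) B (0, x)) = 0) :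
    ω = 0 := by
  classical
  set b := (Pi.basisFun ℝ (Fin k)).prod (Pi.basisFun ℝ (Fin n)) with hb
  have hbl : ∀ i : Fin k, b (Sum.inl i) = ehat n k i := by
    intro i
    apply Prod.ext
    · rw [Module.Basis.prod_apply_inl_fst]; simp [ehat]
    · rw [Module.Basis.prod_apply_inl_snd]; simp [ehat]
  have hbr : ∀ a : Fin n, b (Sum.inr a) = ((0 : Fin k → ℝ), (Pi.single a 1 : Fin n → ℝ)) := by
    intro a
    apply Prod.ext
    · rw [Module.Basis.prod_apply_inr_fst]
    · rw [Module.Basis.prod_apply_inr_snd]; simp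
  refine Module.Basis.ext_alternating b ?_
  intro v hv
  rw [AlternatingMap.zero_apply]
  by_cases h2 : ∃ j₁ j₂ : Fin k, j₁ ≠ j₂ ∧ (v j₁).isRight ∧ (v j₂).isRight
  · obtain ⟨j₁, j₂, hne, h1, h2⟩ := h2
    refine hω _ j₁ j₂ hne ?_ ?_
    · obtain ⟨a, ha⟩ := Sum.isRight_iff.mp h1
      rw [ha, hbr]
    · obtain ⟨a, ha⟩ := Sum.isRight_iff.mp h2
      rw [ha, hbr]
  · push_neg at h2
    by_cases h1 : ∃ B : Fin k, (v B).isRight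
    · -- exactly one vertical slot
      obtain ⟨B, hB⟩ := h1
      obtain ⟨a, ha⟩ := Sum.isRight_iff.mp hB
      have hleft : ∀ j : Fin k, j ≠ B → ∃ i, v j = Sum.inl i := by
        intro j hj
        rcases hvj : v j with i | a'
        · exact ⟨i, rfl⟩
        · refine absurd ?_ (h2 j B hj · hB)
          rw [hvj]; rfl
      have hleft' : ∀ j : Fin k, ∃ i, j ≠ B → v j = Sum.inl i := by
        intro j
        by_cases hj : j ≠ B
        · obtain ⟨i, hi⟩ := hleft j hj; exact ⟨i, fun _ => hi⟩
        · exact ⟨B, fun h => absurd h hj⟩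
      choose g hg using hleft'
      -- g is injective on the complement of B, so its image misses some i₀
      set img := (Finset.univ.erase B).image g with himg
      have hginj : ∀ j₁ ∈ Finset.univ.erase B, ∀ j₂ ∈ Finset.univ.erase B,
          g j₁ = g j₂ → j₁ = j₂ := by
        intro j₁ h₁ j₂ h₂ h
        apply hv
        rw [hg j₁ (Finset.ne_of_mem_erase h₁), hg j₂ (Finset.ne_of_mem_erase h₂), h]
      have hcard : img.card < Fintype.card (Fin k) := by
        rw [himg, Finset.card_image_of_injOn hginj, Finset.card_erase_of_mem (Finset.mem_univ B)]
        simp only [Finset.card_univ, Fintype.card_fin]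
        have : 0 < k := B.pos
        omega
      have hi0 : ∃ i₀ : Fin k, i₀ ∉ img := by
        by_contra hcon
        push_neg at hcon
        have : img = Finset.univ := Finset.eq_univ_iff_forall.mpr hcon
        rw [this] at hcard
        simp at hcard
      obtain ⟨i₀, hi₀⟩ := hi0
      set h : Fin k → Fin k := fun j => if j = B then i₀ else g j with hh
      have hhinj : Function.Injective h := by
        intro j₁ j₂ heq
        simp only [hh] at heq
        by_cases hj1 : j₁ = B <;> by_cases hj2 : j₂ = B
        · rw [hj1, hj2]
        · rw [if_pos hj1, if_neg hj2] at heq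
          exact absurd (himg ▸ Finset.mem_image_of_mem g (Finset.mem_erase.mpr ⟨hj2, Finset.mem_univ _⟩))
            (heq ▸ hi₀)
        · rw [if_neg hj1, if_pos hj2] at heq
          exact absurd (himg ▸ Finset.mem_image_of_mem g (Finset.mem_erase.mpr ⟨hj1, Finset.mem_univ _⟩))
            (heq.symm ▸ hi₀)
        · rw [if_neg hj1, if_neg hj2] at heq
          exact hginj j₁ (Finset.mem_erase.mpr ⟨hj1, Finset.mem_univ _⟩)
            j₂ (Finset.mem_erase.mpr ⟨hj2, Finset.mem_univ _⟩) heq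
      obtain ⟨σ, hσ⟩ : ∃ σ : Equiv.Perm (Fin k), ∀ j, σ j = h j :=
        ⟨Equiv.ofBijective h ((Fintype.bijective_iff_injective_and_card h).mpr ⟨hhinj, rfl⟩),
          fun _ => rfl⟩
      have hfun : (fun i => b (v i))
          = (Function.update (fun i => ehat n k i) i₀ ((0 : Fin k → ℝ), (Pi.single a 1 : Fin n → ℝ))) ∘ σ := by
        funext j
        by_cases hj : j = B
        · have hσB : σ j = i₀ := by rw [hσ]; simp [hh, hj]
          rw [Function.comp_apply, hσB, Function.update_self, hj, ha, hbr]
        · have hgj : g j ∈ img := himg ▸ Finset.mem_image_of_mem g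
            (Finset.mem_erase.mpr ⟨hj, Finset.mem_univ _⟩)
          have hσj : σ j = g j := by rw [hσ]; simp [hh, hj]
          have hne : g j ≠ i₀ := fun hcon => hi₀ (hcon ▸ hgj)
          rw [Function.comp_apply, hσj, Function.update_of_ne hne, hg j hj, hbl]
      rw [hfun, AlternatingMap.map_perm, hα i₀ (Pi.single a 1), smul_zero]
    · -- all horizontal
      push_neg at h1
      have hleft : ∀ j : Fin k, ∃ i, v j = Sum.inl i := by
        intro j
        rcases hvj : v j with i | a'
        · exact ⟨i, rfl⟩
        · refine absurd ?_ (h1 j)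
          rw [hvj]; rfl
      choose g hg using hleft
      have hgi : Function.Injective g := by
        intro j₁ j₂ h
        apply hv
        rw [hg, hg, h]
      obtain ⟨σ, hσ⟩ : ∃ σ : Equiv.Perm (Fin k), ∀ j, σ j = g j :=
        ⟨Equiv.ofBijective g ((Fintype.bijective_iff_injective_and_card g).mpr ⟨hgi, rfl⟩),
          fun _ => rfl⟩
      have : (fun i => b (v i)) = (fun i => ehat n k i) ∘ σ := by
        funext j
        simp only [Function.comp_apply, hσ, hg, hbl]
      rw [this, AlternatingMap.map_perm, hr, smul_zero]


end Stmt13Aux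

/-- `Ψ`, restricted to `Λ^k₂`, is a linear equivalence onto
`ℝ × (Fin k → (V →ₗ[ℝ] ℝ))`: it is linear and bijective. -/
theorem stmt13 (n k : ℕ) (hn : 0 ≤ n) (hk : 1 ≤ k) :
    IsLinearMap ℝ (fun ω : Lambda2 n k => Psi n k ω.1) ∧
    Function.Bijective (fun ω : Lambda2 n k => Psi n k ω.1) := by
  classical
  open Stmt13Aux in
  refine ⟨⟨fun ω₁ ω₂ => by simpa using Psi_add n k ω₁.1 ω₂.1,
      fun c ω => by simpa using Psi_smul n k c ω.1⟩, ?_, ?_⟩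
  · -- injective
    intro ω₁ ω₂ h
    apply Subtype.ext
    have hsub : ω₁.1 - ω₂.1 ∈ Lambda2 n k := sub_mem ω₁.2 ω₂.2
    have hmem := (Stmt13Aux.mem_Lambda2 n k _).mp hsub
    have h' : Psi n k ω₁.1 = Psi n k ω₂.1 := h
    have h1 : (Psi n k ω₁.1).1 = (Psi n k ω₂.1).1 := by rw [h']
    have h2 : (Psi n k ω₁.1).2 = (Psi n k ω₂.1).2 := by rw [h']
    have hzero : ω₁.1 - ω₂.1 = 0 := by
      apply Stmt13Aux.inj_aux n k _ hmem
      · rw [AlternatingMap.sub_apply]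
        rw [Stmt13Aux.Psi_fst n k ω₁.1] at h1
        rw [Stmt13Aux.Psi_fst n k ω₂.1] at h1
        rw [h1, sub_self]
      · intro B x
        rw [AlternatingMap.sub_apply]
        have := congrFun h2 B
        have hx := LinearMap.congr_fun this x
        rw [Stmt13Aux.Psi_snd, Stmt13Aux.Psi_snd] at hx
        rw [hx, sub_self]
    exact sub_eq_zero.mp hzero
  · -- surjective
    rintro ⟨r, α⟩
    set ω : AlternatingMap ℝ ((Fin k → ℝ) × (Fin n → ℝ)) ℝ (Fin k) :=
      r • Stmt13Aux.omega0 n k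
        + ∑ i, Matrix.detRowAlternating.compLinearMap (Stmt13Aux.phiA n k α i) with hω
    have hmem : ω ∈ Lambda2 n k := by
      refine add_mem (Submodule.smul_mem _ r ?_) (Submodule.sum_mem _ fun i _ => ?_)
      · exact (Stmt13Aux.mem_Lambda2 n k _).mpr (Stmt13Aux.omega0_mem n k)
      · exact (Stmt13Aux.mem_Lambda2 n k _).mpr (Stmt13Aux.memA n k α i)
    refine ⟨⟨ω, hmem⟩, ?_⟩
    apply Prod.ext
    · rw [Stmt13Aux.Psi_fst]
      simp only [hω, AlternatingMap.add_apply, AlternatingMap.smul_apply,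
        Stmt13Aux.altsum_apply, Stmt13Aux.omega0_ehat, Stmt13Aux.omegaAi_ehat]
      simp
    · funext B
      apply LinearMap.ext
      intro x
      rw [Stmt13Aux.Psi_snd]
      simp only [hω, AlternatingMap.add_apply, AlternatingMap.smul_apply,
        Stmt13Aux.altsum_apply, Stmt13Aux.omega0_upd, Stmt13Aux.omegaAi_upd]
      simp [Finset.sum_ite_eq']
end

section
/- Let n ≥ 1 and let P = (Fin n → ℝ) × Matrix (Fin n) (Fin n) ℝ, with points written w = (z, π). For α : Fin n let ω^α be the alternating bilinear form on (Fin n → ℝ) × Matrix (Fin n) (Fin n) ℝ given by ω^α((z,π),(z',π')) = ∑_a (π α a * z' a − π' α a * z a). Let A : (Fin n → ℝ) → (Fin n → ℝ) and B : (Fin n → ℝ) → (Fin n → ℝ) be differentiable. Define the observable f : P → (Fin n → ℝ) by f(z,π) α = ∑_a A z a * π α a + B z α, and the vector field X : P → (Fin n → ℝ) × Matrix (Fin n) (Fin n) ℝ by X(z,π) = ( A z, fun α γ => −( ∑_b (fderiv ℝ A z (Pi.single γ 1)) b * π α b + (fderiv ℝ B z (Pi.single γ 1)) α ) ). Then the n-symplectic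 structure equation d f^α = − X ⌟ ω^α holds: for every w ∈ P, every tangent vector u, and every α : Fin n, (fderiv ℝ (fun w => f w α) w) u = − ω^α (X w, u). -/
open scoped BigOperators

attribute [local instance] Matrix.normedAddCommGroup Matrix.normedSpace

/-- The canonical coordinate model `P = ℝⁿ × gl(n,ℝ)` of the frame bundle `Lℝⁿ`,
with `n`-symplectic momentum coordinates `(z^a, π^α_a)`. -/
abbrev P14 (n : ℕ) : Type := (Fin n → ℝ) × Matrix (Fin n) (Fin n) ℝ

/-- The components `ω^α = dπ^α_a ∧ dz^a` of the canonical `n`-symplectic form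
`dθ̂` on `Lℝⁿ`. -/
def omega14 (n : ℕ) (α : Fin n) (v u : P14 n) : ℝ :=
  ∑ a, (v.2 α a * u.1 a - u.2 α a * v.1 a)

/-- The rank-1 symmetric Hamiltonian observable `f^α = A^a(z) π^α_a + B^α(z)`. -/
def obs14 (n : ℕ) (A B : (Fin n → ℝ) → (Fin n → ℝ)) (w : P14 n) (α : Fin n) : ℝ :=
  ∑ a, A w.1 a * w.2 α a + B w.1 α

/-- The Hamiltonian vector field
`X = A^a ∂/∂z^a − (∂_γ A^b π^α_b + ∂_γ B^α) ∂/∂π^α_γ` of the observable `f`. -/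
noncomputable def ham14 (n : ℕ) (A B : (Fin n → ℝ) → (Fin n → ℝ)) (w : P14 n) :
    P14 n :=
  (A w.1, fun α γ =>
    -(∑ b, (fderiv ℝ A w.1 (Pi.single γ 1)) b * w.2 α b +
        (fderiv ℝ B w.1 (Pi.single γ 1)) α))

/-- The `n`-symplectic structure equation `d f^α = − X_f ⌟ ω^α` holds for the
rank-1 symmetric observable `f^α = A^a(z) π^α_a + B^α(z)` and its Hamiltonian
vector field. -/
theorem stmt14 (n : ℕ) (hn : 1 ≤ n)
    (A B : (Fin n → ℝ) → (Fin n → ℝ))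
    (hA : Differentiable ℝ A) (hB : Differentiable ℝ B) :
    ∀ (w : P14 n) (u : P14 n) (α : Fin n),
      fderiv ℝ (fun w => obs14 n A B w α) w u =
        - omega14 n α (ham14 n A B w) u := by
  intro w u α
  set z := w.1 with hz
  set π := w.2 with hπ
  set DA := fderiv ℝ A z with hDA
  set DB := fderiv ℝ B z with hDB
  -- derivative of each coordinate function
  have hAa : ∀ a : Fin n, HasFDerivAt (fun w : P14 n => A w.1 a)
      (((ContinuousLinearMap.proj a).comp DA).comp
        (ContinuousLinearMap.fst ℝ (Fin n → ℝ) (Matrix (Fin n) (Fin n) ℝ))) w := by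
    intro a
    exact (ContinuousLinearMap.proj a).hasFDerivAt.comp w
      (((hA z).hasFDerivAt).comp w (hasFDerivAt_fst : HasFDerivAt (Prod.fst : P14 n → _)
        (ContinuousLinearMap.fst ℝ (Fin n → ℝ) (Matrix (Fin n) (Fin n) ℝ)) w))
  have hπa : ∀ a : Fin n, HasFDerivAt (fun w : P14 n => w.2 α a)
      ((ContinuousLinearMap.proj a).comp ((ContinuousLinearMap.proj α).comp
        (ContinuousLinearMap.snd ℝ (Fin n → ℝ) (Matrix (Fin n) (Fin n) ℝ)))) w := by
    intro a
    exact ((ContinuousLinearMap.proj a).comp ((ContinuousLinearMap.proj α).comp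
      (ContinuousLinearMap.snd ℝ (Fin n → ℝ) (Matrix (Fin n) (Fin n) ℝ)))).hasFDerivAt
  have hBα : HasFDerivAt (fun w : P14 n => B w.1 α)
      (((ContinuousLinearMap.proj α).comp DB).comp
        (ContinuousLinearMap.fst ℝ (Fin n → ℝ) (Matrix (Fin n) (Fin n) ℝ))) w := by
    exact (ContinuousLinearMap.proj α).hasFDerivAt.comp w
      (((hB z).hasFDerivAt).comp w (hasFDerivAt_fst : HasFDerivAt (Prod.fst : P14 n → _)
        (ContinuousLinearMap.fst ℝ (Fin n → ℝ) (Matrix (Fin n) (Fin n) ℝ)) w))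
  have hsum : HasFDerivAt (fun w : P14 n => obs14 n A B w α)
      ((∑ a : Fin n, (A z a •
          ((ContinuousLinearMap.proj a).comp ((ContinuousLinearMap.proj α).comp
            (ContinuousLinearMap.snd ℝ (Fin n → ℝ) (Matrix (Fin n) (Fin n) ℝ)))) +
        π α a • (((ContinuousLinearMap.proj a).comp DA).comp
          (ContinuousLinearMap.fst ℝ (Fin n → ℝ) (Matrix (Fin n) (Fin n) ℝ))))) +
       ((ContinuousLinearMap.proj α).comp DB).comp
         (ContinuousLinearMap.fst ℝ (Fin n → ℝ) (Matrix (Fin n) (Fin n) ℝ))) w := by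
    have h1 : HasFDerivAt (fun w : P14 n => ∑ a, A w.1 a * w.2 α a)
        (∑ a : Fin n, (A z a •
          ((ContinuousLinearMap.proj a).comp ((ContinuousLinearMap.proj α).comp
            (ContinuousLinearMap.snd ℝ (Fin n → ℝ) (Matrix (Fin n) (Fin n) ℝ)))) +
        π α a • (((ContinuousLinearMap.proj a).comp DA).comp
          (ContinuousLinearMap.fst ℝ (Fin n → ℝ) (Matrix (Fin n) (Fin n) ℝ))))) w := by
      refine HasFDerivAt.fun_sum (fun a _ => ?_)
      exact (hAa a).mul (hπa a)
    exact h1.add hBα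
  rw [hsum.fderiv]
  -- evaluate
  have key : ∀ y : Fin n → ℝ, ∀ a : Fin n,
      DA y a = ∑ b, y b * DA (Pi.single b 1) a := by
    intro y a
    conv_lhs => rw [pi_eq_sum_univ y]
    rw [map_sum]
    simp only [Finset.sum_apply, map_smul, Pi.smul_apply, smul_eq_mul]
    refine Finset.sum_congr rfl fun b _ => ?_
    rw [show (Pi.single b 1 : Fin n → ℝ) = fun j => if b = j then 1 else 0 by
      ext j; simp [Pi.single_apply, eq_comm]]
  simp only [ContinuousLinearMap.add_apply, ContinuousLinearMap.sum_apply,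
    ContinuousLinearMap.smul_apply, ContinuousLinearMap.comp_apply,
    ContinuousLinearMap.proj_apply, ContinuousLinearMap.coe_fst',
    ContinuousLinearMap.coe_snd', smul_eq_mul, omega14, ham14]
  have keyA : ∀ a : Fin n, DA u.1 a = ∑ b, u.1 b * DA (Pi.single b 1) a :=
    fun a => key u.1 a
  have keyB : DB u.1 α = ∑ b, u.1 b * DB (Pi.single b 1) α := by
    conv_lhs => rw [pi_eq_sum_univ u.1]
    rw [map_sum]
    simp only [Finset.sum_apply, map_smul, Pi.smul_apply, smul_eq_mul]
    refine Finset.sum_congr rfl fun b _ => ?_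
    rw [show (Pi.single b 1 : Fin n → ℝ) = fun j => if b = j then 1 else 0 by
      ext j; simp [Pi.single_apply, eq_comm]]
  simp only [← hz, ← hπ, ← hDA, ← hDB]
  show (∑ x : Fin n, (A z x * u.2 α x + π α x * DA u.1 x)) + DB u.1 α = _
  have expand : ∀ x : Fin n,
      -(-(∑ b, DA (Pi.single x 1) b * π α b + DB (Pi.single x 1) α) * u.1 x
        - u.2 α x * A z x)
      = (∑ b, DA (Pi.single x 1) b * π α b) * u.1 x
        + DB (Pi.single x 1) α * u.1 x + u.2 α x * A z x := by
    intro x; ring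
  rw [← Finset.sum_neg_distrib]
  simp only [expand]
  have swap : ∑ x : Fin n, π α x * ∑ b, u.1 b * DA (Pi.single b 1) x
      = ∑ x : Fin n, (∑ b, DA (Pi.single x 1) b * π α b) * u.1 x := by
    simp only [Finset.mul_sum, Finset.sum_mul]
    rw [Finset.sum_comm]
    refine Finset.sum_congr rfl fun x _ => Finset.sum_congr rfl fun b _ => by ring
  have e1 : ∑ x : Fin n, A z x * u.2 α x = ∑ x : Fin n, u.2 α x * A z x := by
    refine Finset.sum_congr rfl fun x _ => by ring
  have e2 : (∑ b : Fin n, u.1 b * DB (Pi.single b 1) α)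
      = ∑ x : Fin n, DB (Pi.single x 1) α * u.1 x := by
    refine Finset.sum_congr rfl fun x _ => by ring
  simp only [keyA, keyB, Finset.sum_add_distrib]
  rw [swap, e1, e2]
  ring
end

section
/- Let n, k ≥ 1 and W = (Fin n → ℝ) × (Fin k → Fin n → ℝ). Let Hess : (Fin k × Fin n) → (Fin k × Fin n) → ℝ and M : Fin k → Fin n → Fin n → ℝ be arbitrary coefficient arrays, and for each A : Fin k define the bilinear form (ω_L)_A on W by (ω_L)_A((y,u),(y',u')) = ∑_{j,i} M A j i * (y' j * y i − y j * y' i) + ∑_{B,j,i} Hess (B,j) (A,i) * (u' B j * y i − u B j * y' i). Then the intersection over all A : Fin k of the kernels {w ∈ W : (ω_L)_A(w, u) = 0 for all u ∈ W} equals the zero subspace if and only if the matrix Hess (as an element of Matrix (Fin k × Fin n) (Fin k × Fin n) ℝ) is invertible. -/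
open scoped BigOperators

/-- The linear model of the tangent space of `T¹_kℝⁿ`. -/
abbrev W15 (n k : ℕ) : Type := (Fin n → ℝ) × (Fin k → Fin n → ℝ)

/-- The Lagrangian two-form `(ω_L)_A` at a point, with coefficients
`M A j i = ∂²L/∂x^j∂v^A_i` and `Hess (B,j) (A,i) = ∂²L/∂v^B_j∂v^A_i`. -/
def omegaL (n k : ℕ) (Hess : (Fin k × Fin n) → (Fin k × Fin n) → ℝ)
    (M : Fin k → Fin n → Fin n → ℝ) (A : Fin k) (v u : W15 n k) : ℝ :=
  (∑ j, ∑ i, M A j i * (u.1 j * v.1 i - v.1 j * u.1 i)) +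
    ∑ B, ∑ j, ∑ i, Hess (B, j) (A, i) * (u.2 B j * v.1 i - v.2 B j * u.1 i)

/-- The family `(ω_L)_A` is nondegenerate (the intersection of the kernels of the
`(ω_L)_A` is the zero subspace) if and only if the Hessian matrix is invertible;
i.e. the Lagrangian is regular iff `((ω_L)_A, V)` is a `k`-symplectic structure. -/
theorem stmt15 (n k : ℕ) (hn : 1 ≤ n) (hk : 1 ≤ k)
    (Hess : (Fin k × Fin n) → (Fin k × Fin n) → ℝ)
    (M : Fin k → Fin n → Fin n → ℝ) :
    {w : W15 n k | ∀ (A : Fin k) (u : W15 n k), omegaL n k Hess M A w u = 0} = {0} ↔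
      IsUnit (Matrix.of fun p q : Fin k × Fin n => Hess p q) := by
  set H : Matrix (Fin k × Fin n) (Fin k × Fin n) ℝ :=
    Matrix.of fun p q : Fin k × Fin n => Hess p q with hH
  constructor
  · -- nondegenerate → invertible
    intro hset
    by_contra hunit
    rw [Matrix.isUnit_iff_isUnit_det, isUnit_iff_ne_zero, not_ne_iff,
      ← Matrix.exists_vecMul_eq_zero_iff] at hunit
    obtain ⟨c, hc0, hc⟩ := hunit
    set w : W15 n k := (0, fun B j => c (B, j)) with hw
    have hmem : w ∈ {w : W15 n k | ∀ (A : Fin k) (u : W15 n k),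
        omegaL n k Hess M A w u = 0} := by
      intro A u
      have key : ∀ i : Fin n, (∑ B, ∑ j, Hess (B, j) (A, i) * c (B, j)) = 0 := by
        intro i
        have h := congrFun hc (A, i)
        simpa [Matrix.vecMul, dotProduct, Fintype.sum_prod_type, hH,
          mul_comm] using h
      simp only [omegaL, hw]
      simp only [Pi.zero_apply, mul_zero, zero_mul, sub_zero, zero_sub, mul_neg,
        sub_self, Finset.sum_const_zero, zero_add]
      have swap : (∑ B, ∑ j, ∑ i, -(Hess (B, j) (A, i) * (c (B, j) * u.1 i)))
          = ∑ i, ∑ B, ∑ j, -(Hess (B, j) (A, i) * (c (B, j) * u.1 i)) :=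
        (Finset.sum_congr rfl fun B _ => Finset.sum_comm).trans Finset.sum_comm
      rw [swap]
      refine Finset.sum_eq_zero fun i _ => ?_
      have e : ∀ (B : Fin k) (j : Fin n), -(Hess (B, j) (A, i) * (c (B, j) * u.1 i))
          = (Hess (B, j) (A, i) * c (B, j)) * (-u.1 i) := by
        intro B j; ring
      simp only [e, ← Finset.sum_mul, key i, zero_mul]
    have hw0 : w = 0 := by rw [hset] at hmem; exact hmem
    apply hc0
    ext p
    have := congrArg (fun w : W15 n k => w.2 p.1 p.2) hw0
    simpa using this
  · -- invertible → nondegenerate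
    intro hunit
    ext w
    simp only [Set.mem_setOf_eq, Set.mem_singleton_iff]
    constructor
    · intro hw
      -- Step 1 : w.1 = 0
      have h1 : ∀ (A B : Fin k) (j : Fin n), ∑ i, Hess (B, j) (A, i) * w.1 i = 0 := by
        intro A B j
        have h := hw A (0, (Pi.single B (Pi.single j 1) : Fin k → Fin n → ℝ))
        simp only [omegaL, Pi.zero_apply, zero_mul, mul_zero, sub_zero,
          sub_self, Finset.sum_const_zero, zero_add] at h
        simpa [Pi.single_apply, ite_apply, Pi.zero_apply, mul_ite, ite_mul,
          Finset.sum_ite_eq, Finset.sum_ite_eq'] using h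
      have hy : w.1 = 0 := by
        have hinj := Matrix.mulVec_injective_iff_isUnit.2 hunit
        have hmv : H.mulVec (fun p : Fin k × Fin n => w.1 p.2) = H.mulVec 0 := by
          rw [Matrix.mulVec_zero]
          ext p
          obtain ⟨B, j⟩ := p
          simp only [Matrix.mulVec, dotProduct, Fintype.sum_prod_type, hH,
            Matrix.of_apply, Pi.zero_apply]
          simpa using Finset.sum_congr rfl fun A (_ : A ∈ Finset.univ) => h1 A B j
        have h0 := hinj hmv
        ext i
        exact congrFun h0 (⟨0, hk⟩, i)
      -- Step 2 : w.2 = 0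
      have h2 : ∀ (A : Fin k) (i : Fin n), ∑ B, ∑ j, w.2 B j * Hess (B, j) (A, i) = 0 := by
        intro A i
        have h := hw A ((Pi.single i 1 : Fin n → ℝ), 0)
        simp only [omegaL, hy, Pi.zero_apply, zero_mul, mul_zero, sub_zero, zero_sub,
          sub_self, Finset.sum_const_zero, zero_add, mul_neg, Finset.sum_neg_distrib,
          neg_eq_zero] at h
        have e : ∀ (B : Fin k) (j : Fin n) (i' : Fin n),
            Hess (B, j) (A, i') * (w.2 B j * (Pi.single i 1 : Fin n → ℝ) i')
            = (w.2 B j * Hess (B, j) (A, i')) * (Pi.single i 1 : Fin n → ℝ) i' := by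
          intro B j i'; ring
        simp only [e] at h
        simpa [Pi.single_apply, mul_ite, Finset.sum_ite_eq, Finset.sum_ite_eq'] using h
      have hz : w.2 = 0 := by
        have hinj := Matrix.vecMul_injective_iff_isUnit.2 hunit
        have hmv : Matrix.vecMul (fun p : Fin k × Fin n => w.2 p.1 p.2) H
            = Matrix.vecMul 0 H := by
          rw [Matrix.zero_vecMul]
          ext p
          obtain ⟨A, i⟩ := p
          simp only [Matrix.vecMul, dotProduct, Fintype.sum_prod_type, hH,
            Matrix.of_apply, Pi.zero_apply]
          simpa using h2 A i
        have h0 := hinj hmv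
        have : w.2 = fun B j => (0 : W15 n k).2 B j := by
          ext B j; exact congrFun h0 (B, j)
        exact this
      exact Prod.ext hy hz
    · rintro rfl
      intro A u
      simp [omegaL]
end
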